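/- Let κ be an inaccessible cardinal. Suppose B ⊆ 2^κ is comeager in a basic open set: there are s ∈ 2^{<κ} and nowhere dense sets X_i (i < κ) with [s] ∖ B ⊆ ⋃_{i<κ} X_i. Then there is a κ-Silver tree S with [S] ⊆ [s] and [S] ∩ X_i = ∅ for all i < κ; in particular [S] ⊆ B. -/

import Mathlib

open Cardinal Set

structure PreSeq2 where
  len : Ordinal
  val : Ordinal → Bool

def PreSeq2.Canonical (s : PreSeq2) : Prop := ∀ i, s.len ≤ i → s.val i = false

def IsClubIn (c : Set Ordinal) (k : Ordinal) : Prop :=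
  c ⊆ Set.Iio k ∧
  (∀ l, l < k → Order.IsSuccLimit l → (∀ a < l, ∃ b ∈ c, a ≤ b ∧ b < l) → l ∈ c) ∧
  (∀ a < k, ∃ b ∈ c, a ≤ b)

def boundedTop2 (κ : Cardinal) : TopologicalSpace (Ordinal → Bool) :=
  TopologicalSpace.generateFrom
    { U | ∃ a < κ.ord, ∃ s : Ordinal → Bool, U = { x | ∀ i < a, x i = s i } }

def Nwd2 (κ : Cardinal) (A : Set (Ordinal → Bool)) : Prop :=
  @interior _ (boundedTop2 κ) (@closure _ (boundedTop2 κ) A) = ∅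

/-- The branch set of the κ-Silver condition `f : κ → {0, 1, {0,1}}` (with `none`
playing the role of `{0,1}`). -/
def SilverSet (κ : Cardinal) (f : Ordinal → Option Bool) : Set (Ordinal → Bool) :=
  { x | ∀ i < κ.ord, ∀ b, f i = some b → x i = b }

/-!
Nowhere density is used in its combinatorial form: every basic open set `[p↾a]` contains a
basic open set `[q↾b]` missing the set. By regularity of `κ` this property is preserved by
unions of fewer than `κ` sets (a fusion sequence of length `< κ`, taking unions at limits).
At a stage `δ`, inaccessibility makes the `2^|δ+1|` patterns on the coordinates `≤ δ` fewer
than `κ`, so a single assignment `r` on `(δ, b)` keeps every branch out of `X α` whatever its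
values up to `δ`. Running this for `α < κ` along a normal sequence of stages `δ_α` starting at
`s` gives a branch `y`; the Silver condition leaves the club `{δ_α}` free and follows `y`
elsewhere, so its branches extend `s` and avoid every `X α`.
-/

open scoped Topology

universe u

namespace KappaCantor

variable {κ : Cardinal.{u}}

-- `cyl (Iio a) p` is the basic open set `[p↾a]`.
def cyl (S : Set Ordinal) (p : Ordinal → Bool) : Set (Ordinal → Bool) :=
  {x | ∀ j ∈ S, x j = p j}

lemma mem_cyl_self (S : Set Ordinal) (p : Ordinal → Bool) : p ∈ cyl S p := fun _ _ => rfl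

lemma mem_cyl_comm {S : Set Ordinal} {x p : Ordinal → Bool} : x ∈ cyl S p ↔ p ∈ cyl S x :=
  ⟨fun h j hj => (h j hj).symm, fun h j hj => (h j hj).symm⟩

lemma mem_cyl_of_mem_of_subset {S T : Set Ordinal} {x y p : Ordinal → Bool} (hx : x ∈ cyl T y)
    (hy : y ∈ cyl S p) (hST : S ⊆ T) : x ∈ cyl S p :=
  fun j hj => (hx j (hST hj)).trans (hy j hj)

lemma cyl_eq_of_mem {S : Set Ordinal} {x p : Ordinal → Bool} (h : x ∈ cyl S p) :
    cyl S x = cyl S p := by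
  ext y
  exact ⟨fun hy => mem_cyl_of_mem_of_subset hy h le_rfl,
    fun hy => mem_cyl_of_mem_of_subset hy (mem_cyl_comm.1 h) le_rfl⟩

lemma cyl_anti {S T : Set Ordinal} (hST : S ⊆ T) (p : Ordinal → Bool) : cyl T p ⊆ cyl S p :=
  fun _ hx j hj => hx j (hST hj)

lemma isTopologicalBasis_cyl (hκ : κ ≠ 0) :
    @TopologicalSpace.IsTopologicalBasis _ (boundedTop2 κ)
      {U | ∃ a < κ.ord, ∃ p, U = cyl (Iio a) p} := by
  refine @TopologicalSpace.IsTopologicalBasis.mk _ (boundedTop2 κ) _ ?_ ?_ rfl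
  · rintro _ ⟨a, ha, p, rfl⟩ _ ⟨b, hb, q, rfl⟩ x ⟨hxp, hxq⟩
    refine ⟨cyl (Iio (max a b)) x, ⟨max a b, max_lt ha hb, x, rfl⟩, mem_cyl_self _ _,
      subset_inter (fun y hy => ?_) (fun y hy => ?_)⟩
    · exact mem_cyl_of_mem_of_subset hy hxp (Iio_subset_Iio (le_max_left a b))
    · exact mem_cyl_of_mem_of_subset hy hxq (Iio_subset_Iio (le_max_right a b))
  · refine eq_univ_of_forall fun x => ⟨cyl (Iio 0) x, ⟨0, ?_, x, rfl⟩, mem_cyl_self _ _⟩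
    rwa [Cardinal.ord_pos, pos_iff_ne_zero]

lemma exists_cyl_subset_of_isOpen (hκ : κ ≠ 0) {U : Set (Ordinal → Bool)}
    (hU : IsOpen[boundedTop2 κ] U) {x : Ordinal → Bool} (hx : x ∈ U) :
    ∃ a < κ.ord, cyl (Iio a) x ⊆ U := by
  obtain ⟨_, ⟨a, ha, p, rfl⟩, hxp, hsub⟩ :=
    (@TopologicalSpace.IsTopologicalBasis.isOpen_iff _ (boundedTop2 κ) _ _
      (isTopologicalBasis_cyl hκ)).1 hU x hx
  exact ⟨a, ha, (cyl_eq_of_mem hxp).trans_subset hsub⟩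

def NowhereDenseCyl (κ : Cardinal) (A : Set (Ordinal → Bool)) : Prop :=
  ∀ a < κ.ord, ∀ p, ∃ b, a < b ∧ b < κ.ord ∧ ∃ q ∈ cyl (Iio a) p, Disjoint (cyl (Iio b) q) A

lemma _root_.Nwd2.nowhereDenseCyl (hκ : ℵ₀ ≤ κ) {A : Set (Ordinal → Bool)} (hA : Nwd2 κ A) :
    NowhereDenseCyl κ A := by
  have hκ0 : κ ≠ 0 := (aleph0_pos.trans_le hκ).ne'
  intro a ha p
  have hU : IsOpen[boundedTop2 κ] (cyl (Iio a) p) :=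
    @TopologicalSpace.IsTopologicalBasis.isOpen _ (boundedTop2 κ) _ _
      (isTopologicalBasis_cyl hκ0) ⟨a, ha, p, rfl⟩
  obtain ⟨y, hyp, hyA⟩ : ∃ y ∈ cyl (Iio a) p, y ∉ closure[boundedTop2 κ] A := by
    by_contra! h
    have hsub := @interior_maximal _ (boundedTop2 κ) _ _ h hU
    rw [Nwd2] at hA
    rw [hA] at hsub
    exact hsub (mem_cyl_self _ _)
  obtain ⟨b, hb, hsub⟩ := exists_cyl_subset_of_isOpen hκ0
    (@isClosed_closure _ (boundedTop2 κ) A).isOpen_compl hyA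
  refine ⟨max (a + 1) b, (lt_add_one a).trans_le (le_max_left _ _),
    max_lt ((isSuccLimit_ord hκ).add_one_lt ha) hb, y, hyp, ?_⟩
  have hsub' := (cyl_anti (Iio_subset_Iio (le_max_right (a + 1) b)) y).trans hsub
  exact (subset_compl_iff_disjoint_right.1 hsub').mono_right (@subset_closure _ (boundedTop2 κ) A)

-- A stem `(b, q)` stands for the node `q↾b` of `2^{<κ}`; the values of `q` from `b` on are ignored.
abbrev Stem : Type (u + 1) := Ordinal.{u} × (Ordinal.{u} → Bool)

open scoped Classical in
noncomputable def stemChain (a : Ordinal.{u}) (p : Ordinal.{u} → Bool)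
    (step : Ordinal.{u} → Stem.{u} → Stem.{u}) (ρ : Ordinal.{u}) : Stem.{u} :=
  Ordinal.limitRecOn ρ (a, p) step fun ν _ ih =>
    (⨆ β : Iio ν, (ih β β.2).1,
      fun j => if h : ∃ β : Iio ν, j < (ih β β.2).1 then (ih h.choose h.choose.2).2 j else p j)

section stemChain

variable {a : Ordinal.{u}} {p : Ordinal.{u} → Bool} {step : Ordinal.{u} → Stem.{u} → Stem.{u}}

@[simp]
lemma stemChain_zero : stemChain a p step 0 = (a, p) := by
  simp [stemChain]

@[simp]
lemma stemChain_add_one (ν : Ordinal) :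
    stemChain a p step (ν + 1) = step ν (stemChain a p step ν) := by
  simp [stemChain]

lemma len_stemChain_of_isSuccLimit {ν : Ordinal} (hν : Order.IsSuccLimit ν) :
    (stemChain a p step ν).1 = ⨆ β : Iio ν, (stemChain a p step β).1 := by
  rw [stemChain, Ordinal.limitRecOn_limit _ _ _ _ hν]
  rfl

lemma exists_val_stemChain_of_isSuccLimit {ν : Ordinal} (hν : Order.IsSuccLimit ν) {j : Ordinal}
    (hj : ∃ β < ν, j < (stemChain a p step β).1) :
    ∃ β < ν, j < (stemChain a p step β).1 ∧
      (stemChain a p step ν).2 j = (stemChain a p step β).2 j := by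
  have hj' : ∃ β : Iio ν, j < (stemChain a p step β).1 := by
    obtain ⟨β, hβ, hjβ⟩ := hj
    exact ⟨⟨β, hβ⟩, hjβ⟩
  refine ⟨hj'.choose, hj'.choose.2, hj'.choose_spec, ?_⟩
  rw [stemChain, Ordinal.limitRecOn_limit _ _ _ _ hν]
  exact dif_pos hj'

variable (hlen : ∀ ν t, t.1 < (step ν t).1)
  (hval : ∀ ν t, (step ν t).2 ∈ cyl (Iio t.1) t.2)

include hlen in
lemma isNormal_len_stemChain : Order.IsNormal fun ρ => (stemChain a p step ρ).1 := by
  refine Order.IsNormal.of_succ_lt (fun ν => ?_) (fun {ν} hν => ?_)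
  · rw [Order.succ_eq_add_one, stemChain_add_one]
    exact hlen _ _
  · rw [len_stemChain_of_isSuccLimit hν]
    have hbdd : BddAbove ((fun β => (stemChain a p step β).1) '' Iio ν) :=
      Ordinal.bddAbove_of_small
    exact isLUB_ciSup_set hbdd hν.nonempty_Iio

include hlen hval in
lemma val_stemChain_mem_cyl {ρ ρ' : Ordinal} (hρ : ρ ≤ ρ') :
    (stemChain a p step ρ').2 ∈ cyl (Iio (stemChain a p step ρ).1) (stemChain a p step ρ).2 := by
  induction ρ' using Ordinal.limitRecOn generalizing ρ with
  | zero =>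
    rw [nonpos_iff_eq_zero.1 hρ]
    exact mem_cyl_self _ _
  | add_one ν ih =>
    rcases hρ.lt_or_eq with hρ | rfl
    · have hρν : ρ ≤ ν := Order.lt_add_one_iff.1 hρ
      rw [stemChain_add_one]
      refine mem_cyl_of_mem_of_subset (hval _ _) (ih hρν) (Iio_subset_Iio ?_)
      exact (isNormal_len_stemChain hlen).monotone hρν
    · exact mem_cyl_self _ _
  | limit ν hν ih =>
    rcases hρ.lt_or_eq with hρ | rfl
    · intro j hj
      obtain ⟨β, hβ, hjβ, hβj⟩ := exists_val_stemChain_of_isSuccLimit hν ⟨ρ, hρ, hj⟩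
      rw [hβj]
      rcases le_total β ρ with hβρ | hρβ
      · exact (mem_cyl_comm.1 (ih ρ hρ hβρ)) j hjβ
      · exact ih β hβ hρβ j hj
    · exact mem_cyl_self _ _

-- Each coordinate `j` is decided from stage `j + 1` on.
noncomputable def stemBranch (a : Ordinal.{u}) (p : Ordinal.{u} → Bool)
    (step : Ordinal.{u} → Stem.{u} → Stem.{u}) (j : Ordinal.{u}) : Bool :=
  (stemChain a p step (j + 1)).2 j

include hlen hval in
lemma stemBranch_mem_cyl (ρ : Ordinal) :
    stemBranch a p step ∈ cyl (Iio (stemChain a p step ρ).1) (stemChain a p step ρ).2 := by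
  intro j hj
  have hj' : j < (stemChain a p step (j + 1)).1 :=
    (lt_add_one j).trans_le (isNormal_len_stemChain hlen).strictMono.le_apply
  rcases le_total ρ (j + 1) with h | h
  · exact val_stemChain_mem_cyl hlen hval h j hj
  · exact (val_stemChain_mem_cyl hlen hval h j hj').symm

lemma len_stemChain_lt_ord (hκ : κ.IsRegular) (ha : a < κ.ord)
    (hstep : ∀ ν t, t.1 < κ.ord → (step ν t).1 < κ.ord) {ρ : Ordinal} (hρ : ρ < κ.ord) :
    (stemChain a p step ρ).1 < κ.ord := by
  induction ρ using Ordinal.limitRecOn with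
  | zero => simpa using ha
  | add_one ν ih =>
    rw [stemChain_add_one]
    exact hstep _ _ (ih ((lt_add_one ν).trans hρ))
  | limit ν hν ih =>
    rw [len_stemChain_of_isSuccLimit hν]
    apply Ordinal.lift_iSup_lt_of_lt_cof
    · rwa [← Ordinal.lift_cof, hκ.cof_ord, mk_Iio_ordinal, lift_lift, lift_lt, ← lt_ord]
    · exact fun β => ih β β.2 (β.2.trans hρ)

end stemChain

theorem exists_fusion (hκ : κ.IsRegular) {μ : Ordinal} (hμ : μ ≤ κ.ord) {a : Ordinal}
    (ha : a < κ.ord) (p : Ordinal → Bool)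
    (R : Ordinal → Ordinal → Ordinal → (Ordinal → Bool) → Prop)
    (hR : ∀ ν < μ, ∀ b < κ.ord, ∀ q, ∃ b', b < b' ∧ b' < κ.ord ∧
      ∃ q' ∈ cyl (Iio b) q, ∀ y ∈ cyl (Iio b') q', R ν b b' y) :
    ∃ (len : Ordinal → Ordinal) (y : Ordinal → Bool), len 0 = a ∧ y ∈ cyl (Iio a) p ∧
      Order.IsNormal len ∧ (∀ ρ < κ.ord, len ρ < κ.ord) ∧
      ∀ ν < μ, R ν (len ν) (len (ν + 1)) y := by
  choose! nb hnb hnbκ nq hnq hnR using hR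
  let step (ν : Ordinal) (t : Stem) : Stem :=
    if ν < μ ∧ t.1 < κ.ord then (nb ν t.1 t.2, nq ν t.1 t.2) else (t.1 + 1, t.2)
  have hstep (ν t) : t.1 < (step ν t).1 ∧ (step ν t).2 ∈ cyl (Iio t.1) t.2 ∧
      (t.1 < κ.ord → (step ν t).1 < κ.ord) := by
    dsimp only [step]
    split_ifs with h
    · exact ⟨hnb ν h.1 _ h.2 _, hnq ν h.1 _ h.2 _, fun _ => hnbκ ν h.1 _ h.2 _⟩
    · exact ⟨lt_add_one _, mem_cyl_self _ _, (isSuccLimit_ord hκ.aleph0_le).add_one_lt⟩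
  have hlen (ν t) := (hstep ν t).1
  have hval (ν t) := (hstep ν t).2.1
  have hy := stemBranch_mem_cyl (a := a) (p := p) hlen hval
  set D := stemChain a p step
  have hlt {ρ} (hρ : ρ < κ.ord) : (D ρ).1 < κ.ord :=
    len_stemChain_lt_ord hκ ha (fun ν t => (hstep ν t).2.2) hρ
  refine ⟨fun ρ => (D ρ).1, stemBranch a p step, by simp [D], by simpa [D] using hy 0,
    isNormal_len_stemChain hlen, fun ρ hρ => hlt hρ, fun ν hν => ?_⟩
  have hcond : ν < μ ∧ (D ν).1 < κ.ord := ⟨hν, hlt (hν.trans_le hμ)⟩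
  have hsucc : D (ν + 1) = (nb ν (D ν).1 (D ν).2, nq ν (D ν).1 (D ν).2) := by
    simp only [D, stemChain_add_one, step, if_pos hcond]
  have hyν := hy (ν + 1)
  show R ν (D ν).1 (D (ν + 1)).1 (stemBranch a p step)
  rw [hsucc] at hyν ⊢
  exact hnR ν hν _ hcond.2 _ _ hyν

lemma NowhereDenseCyl.preimage_piecewise {A : Set (Ordinal → Bool)} (hA : NowhereDenseCyl κ A)
    {d : Ordinal} (hd : d < κ.ord) (t : Ordinal → Bool) :
    NowhereDenseCyl κ ((fun x => (Iio d).piecewise t x) ⁻¹' A) := by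
  intro a ha p
  obtain ⟨b, hab, hb, q, hq, hqA⟩ := hA (max a d) (max_lt ha hd) ((Iio d).piecewise t p)
  refine ⟨b, (le_max_left a d).trans_lt hab, hb, (Iio a).piecewise p q,
    fun j hj => piecewise_eq_of_mem _ _ _ hj, disjoint_left.2 fun x hx => ?_⟩
  refine disjoint_left.1 hqA (fun j hj => ?_)
  have hjd := hq j
  have hja := hx j hj
  simp only [mem_Iio, lt_max_iff, piecewise] at hjd hja ⊢
  split_ifs at hjd hja ⊢ <;> simp_all

lemma NowhereDenseCyl.biUnion (hκ : κ.IsRegular) {μ : Ordinal} (hμ : μ < κ.ord)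
    {Y : Ordinal → Set (Ordinal → Bool)} (hY : ∀ ρ < μ, NowhereDenseCyl κ (Y ρ)) :
    NowhereDenseCyl κ (⋃ ρ < μ, Y ρ) := by
  intro a ha p
  obtain ⟨len, y, h0, hy, hnorm, hlt, hR⟩ := exists_fusion hκ hμ.le ha p
    (fun ν _ b' y => Disjoint (cyl (Iio b') y) (Y ν)) fun ν hν b hb q => by
      obtain ⟨b', hbb', hb', q', hq', hd⟩ := hY ν hν b hb q
      exact ⟨b', hbb', hb', q', hq', fun y hy => cyl_eq_of_mem hy ▸ hd⟩
  have hμ1 : μ + 1 < κ.ord := (isSuccLimit_ord hκ.aleph0_le).add_one_lt hμ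
  refine ⟨len (μ + 1), h0 ▸ hnorm.strictMono (by simp), hlt _ hμ1, y, hy,
    disjoint_iUnion₂_right.2 fun ρ hρ => (hR ρ hρ).mono_left (cyl_anti ?_ y)⟩
  exact Iio_subset_Iio (hnorm.monotone (by gcongr))

lemma exists_enum_cyl (a : Ordinal.{u}) : ∃ p : Ordinal.{u} → Ordinal.{u} → Bool,
    ∀ x : Ordinal.{u} → Bool, ∃ ρ < ((2 : Cardinal) ^ a.card).ord, x ∈ cyl (Iio a) (p ρ) := by
  set μ := ((2 : Cardinal) ^ a.card).ord
  have hcard : #(Iio μ) = #(Iio a → Bool) := by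
    simp [μ, mk_Iio_ordinal]
  obtain ⟨e⟩ := Cardinal.eq.1 hcard
  refine ⟨fun ρ j => if h : ρ ∈ Iio μ ∧ j ∈ Iio a then e ⟨ρ, h.1⟩ ⟨j, h.2⟩ else false,
    fun x => ⟨e.symm fun j => x j, (e.symm _).2, fun j hj => ?_⟩⟩
  simp [hj]

theorem NowhereDenseCyl.exists_disjoint_cyl_Ioo (hκ : κ.IsInaccessible)
    {A : Set (Ordinal → Bool)} (hA : NowhereDenseCyl κ A) {δ : Ordinal} (hδ : δ < κ.ord) :
    ∃ b, δ < b ∧ b < κ.ord ∧ ∃ r, Disjoint (cyl (Ioo δ b) r) A := by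
  have hlim := isSuccLimit_ord hκ.aleph0_lt.le
  have hδ1 : δ + 1 < κ.ord := hlim.add_one_lt hδ
  obtain ⟨p, hp⟩ := exists_enum_cyl (δ + 1)
  have hμ : ((2 : Cardinal) ^ (δ + 1).card).ord < κ.ord :=
    ord_lt_ord.2 (hκ.isStrongPrelimit (lt_ord.1 hδ1))
  -- the coordinates up to `δ` are left free: avoid `A` for every pattern on them at once
  have hA' := NowhereDenseCyl.biUnion hκ.isRegular hμ
    fun ρ _ => hA.preimage_piecewise hδ1 (p ρ)
  obtain ⟨b, hδb, hb, r, -, hr⟩ := hA' (δ + 1) hδ1 fun _ => false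
  refine ⟨b, (lt_add_one δ).trans hδb, hb, r, disjoint_left.2 fun x hx hxA => ?_⟩
  obtain ⟨ρ, hρ, hxρ⟩ := hp x
  have hspliced : (Iio (δ + 1)).piecewise r x ∈ cyl (Iio b) r := by
    intro j hj
    by_cases hjδ : j < δ + 1
    · exact piecewise_eq_of_mem _ _ _ (mem_Iio.2 hjδ)
    · rw [piecewise_eq_of_notMem _ _ _ (mt mem_Iio.1 hjδ)]
      exact hx j ⟨Order.add_one_le_iff.1 (not_lt.1 hjδ), hj⟩
  have hrestored : (Iio (δ + 1)).piecewise (p ρ) ((Iio (δ + 1)).piecewise r x) = x := by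
    ext j
    by_cases hjδ : j < δ + 1
    · simp [piecewise, hjδ, hxρ j hjδ]
    · simp [piecewise, hjδ]
  exact disjoint_left.1 hr hspliced (mem_iUnion₂.2 ⟨ρ, hρ, by simpa [hrestored] using hxA⟩)

lemma isClubIn_range_inter_Iio {f : Ordinal.{u} → Ordinal.{u}} (hf : Order.IsNormal f)
    {k : Ordinal.{u}} (hk : ∀ a < k, f a < k) : IsClubIn (range f ∩ Iio k) k := by
  refine ⟨inter_subset_right, fun l hlk hl hcof => ⟨?_, hlk⟩,
    fun a ha => ⟨f a, ⟨mem_range_self a, hk a ha⟩, hf.strictMono.le_apply⟩⟩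
  have hlub : IsLUB (range f ∩ Iio l) l := by
    refine ⟨fun b hb => hb.2.le, fun u hu => ?_⟩
    by_contra! hul
    obtain ⟨b, ⟨hbf, -⟩, hub, hbl⟩ := hcof (u + 1) (hl.add_one_lt hul)
    exact (hu ⟨hbf, hbl⟩).not_gt ((lt_add_one u).trans_le hub)
  obtain ⟨b, ⟨hbf, -⟩, -, hbl⟩ := hcof 0 hl.pos
  exact hf.dirSupClosed_range inter_subset_left ⟨b, hbf, hbl⟩ (.of_linearOrder _) hlub

lemma notMem_range_of_mem_Ioo {f : Ordinal.{u} → Ordinal.{u}} (hf : StrictMono f)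
    {i j : Ordinal.{u}} (hj : j ∈ Ioo (f i) (f (i + 1))) : j ∉ range f := by
  rintro ⟨α, rfl⟩
  exact (Order.lt_add_one_iff.1 (hf.lt_iff_lt.1 hj.2)).not_gt (hf.lt_iff_lt.1 hj.1)

lemma silverSet_ite (κ : Cardinal.{u}) (c : Set Ordinal.{u}) [DecidablePred (· ∈ c)]
    (y : Ordinal.{u} → Bool) :
    SilverSet κ (fun j => if j ∈ c then none else some (y j)) = cyl (Iio κ.ord \ c) y := by
  ext x
  refine ⟨fun hx j ⟨hj, hjc⟩ => hx j hj _ (if_neg hjc), fun hx j hj b hb => ?_⟩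
  dsimp only at hb
  split_ifs at hb with hjc
  exact (hx j ⟨hj, hjc⟩).trans (Option.some_inj.1 hb)

end KappaCantor

open KappaCantor in
theorem comeager_contains_silver_general (κ : Cardinal) (hin : κ.IsInaccessible)
    (B : Set (Ordinal → Bool)) (s : PreSeq2) (hlen : s.len < κ.ord)
    (X : Ordinal → Set (Ordinal → Bool))
    (hX : ∀ i < κ.ord, Nwd2 κ (X i))
    (hcover : { x | ∀ i < s.len, x i = s.val i } \ B ⊆ ⋃ i ∈ Set.Iio κ.ord, X i) :
    ∃ f : Ordinal → Option Bool,
      (∃ c, IsClubIn c κ.ord ∧ ∀ i ∈ c, f i = none) ∧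
      SilverSet κ f ⊆ { x | ∀ i < s.len, x i = s.val i } ∧
      (∀ i < κ.ord, SilverSet κ f ∩ X i = ∅) ∧
      SilverSet κ f ⊆ B := by
  classical
  obtain ⟨len, y, h0, hy, hnorm, hlt, hR⟩ := exists_fusion hin.isRegular le_rfl hlen s.val
    (fun ν b b' y => Disjoint (cyl (Ioo b b') y) (X ν)) fun ν hν b hb q => by
      obtain ⟨b', hbb', hb', r, hr⟩ :=
        ((hX ν hν).nowhereDenseCyl hin.aleph0_lt.le).exists_disjoint_cyl_Ioo hin hb
      refine ⟨b', hbb', hb', (Iio b).piecewise q r, fun j hj => piecewise_eq_of_mem _ _ _ hj,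
        fun z hz => ?_⟩
      have hzr : z ∈ cyl (Ioo b b') r := fun j hj =>
        (hz j hj.2).trans (piecewise_eq_of_notMem _ _ _ hj.1.not_gt)
      rwa [cyl_eq_of_mem hzr]
  set c := range len ∩ Iio κ.ord
  have hsilver := silverSet_ite κ c y
  have hstem : cyl (Iio κ.ord \ c) y ⊆ cyl (Iio s.len) s.val := by
    refine fun x hx => mem_cyl_of_mem_of_subset hx hy fun j hj => ⟨hj.trans hlen, ?_⟩
    rintro ⟨⟨α, rfl⟩, -⟩
    have h0α : len 0 ≤ len α := hnorm.monotone zero_le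
    exact (h0 ▸ h0α).not_gt hj
  have hdisj (i) (hi : i < κ.ord) : cyl (Iio κ.ord \ c) y ∩ X i = ∅ := by
    refine disjoint_iff_inter_eq_empty.1 ((hR i hi).mono_left (cyl_anti (fun j hj => ?_) y))
    exact ⟨hj.2.trans (hlt _ ((isSuccLimit_ord hin.aleph0_lt.le).add_one_lt hi)),
      fun hjc => notMem_range_of_mem_Ioo hnorm.strictMono hj hjc.1⟩
  refine ⟨_, ⟨c, isClubIn_range_inter_Iio hnorm hlt, fun i hi => if_pos hi⟩, hsilver ▸ hstem,
    hsilver ▸ hdisj, hsilver ▸ fun x hx => ?_⟩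
  by_contra hxB
  obtain ⟨i, hi, hxi⟩ := mem_iUnion₂.1 (hcover ⟨hstem hx, hxB⟩)
  exact (hdisj i hi).subset ⟨hx, hxi⟩

/-- For inaccessible `κ`, a set comeager in a basic open subset of `2^κ` contains
the branch set of a κ-Silver condition. -/
theorem comeager_contains_silver (κ : Cardinal) (hin : κ.IsInaccessible)
    (B : Set (Ordinal → Bool)) (s : PreSeq2) (hlen : s.len < κ.ord)
    (hcan : s.Canonical) (X : Ordinal → Set (Ordinal → Bool))
    (hX : ∀ i < κ.ord, Nwd2 κ (X i))
    (hcover : { x | ∀ i < s.len, x i = s.val i } \ B ⊆ ⋃ i ∈ Set.Iio κ.ord, X i) :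
    ∃ f : Ordinal → Option Bool,
      (∃ c, IsClubIn c κ.ord ∧ ∀ i ∈ c, f i = none) ∧
      SilverSet κ f ⊆ { x | ∀ i < s.len, x i = s.val i } ∧
      (∀ i < κ.ord, SilverSet κ f ∩ X i = ∅) ∧
      SilverSet κ f ⊆ B :=
  comeager_contains_silver_general κ hin B s hlen X hX hcover
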